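/- arXiv:0901.3754 — 5 statements merged into one kernel-verified Lean document; each statement's English description precedes it below -/
import Mathlib

section
/- If T is an optimal feasible winning set (maximizing utility u(T) = Σ_{q∈T} (v(q)−c(q))·n(q) over all feasible winning sets), then the bid b defined by b(q) = c(q) for every q ∈ T with positive weight and b(q) = 0 otherwise is an optimal bid, i.e., u(φ(b)) ≥ u(φ(b')) for every bid b'. -/
open Finset

/-- The utility of a set of queries: the sum of weights over the set. -/
noncomputable def utility {Q : Type*} [Fintype Q] (w : Q → ℝ) (T : Set Q) : ℝ :=
  ∑ q : Q, Set.indicator T w q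

/-- The winning set of a bid under the broad-match (max-aggregation) interpretation:
a query is won if it is reachable along dependency pairs from some query whose
explicit bid meets its cost. -/
def winSet {Q : Type*} (C : Set (Q × Q)) (c : Q → ℝ) (b : Q → ℝ) : Set Q :=
  {q | ∃ q', Relation.ReflTransGen (fun a a' => (a, a') ∈ C) q' q ∧ c q' ≤ b q'}

/-- A set `T` is closed under the dependency relation. -/
def depClosed {Q : Type*} (C : Set (Q × Q)) (T : Set Q) : Prop :=
  ∀ q' q, (q', q) ∈ C → q' ∈ T → q ∈ T

lemma winSet_depClosed {Q : Type*} (C : Set (Q × Q)) (c b : Q → ℝ) :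
    depClosed C (winSet C c b) := by
  rintro q' q hC ⟨q₀, hrtg, hle⟩
  exact ⟨q₀, hrtg.tail hC, hle⟩

lemma cost_le_of_rtg {Q : Type*} (C : Set (Q × Q)) (c : Q → ℝ)
    (hCc : ∀ q' q, (q', q) ∈ C → c q ≤ c q') {q' q : Q}
    (h : Relation.ReflTransGen (fun a a' => (a, a') ∈ C) q' q) : c q ≤ c q' := by
  induction h with
  | refl => exact le_refl _
  | tail _ hstep ih => exact le_trans (hCc _ _ hstep) ih

lemma mem_of_rtg {Q : Type*} (C : Set (Q × Q)) {T : Set Q} (hT : depClosed C T)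
    {q' q : Q} (h : Relation.ReflTransGen (fun a a' => (a, a') ∈ C) q' q)
    (hq' : q' ∈ T) : q ∈ T := by
  induction h with
  | refl => exact hq'
  | tail _ hstep ih => exact hT _ _ hstep ih

/-- if `T` is an optimal feasible winning set, then the bid placing
`c q` on every positive-weight query of `T` and `0` elsewhere is an optimal bid. -/
theorem stmt_0 {Q : Type*} [Fintype Q] (C : Set (Q × Q)) (c v n : Q → ℝ)
    (hc : ∀ q, 0 ≤ c q) (hv : ∀ q, 0 ≤ v q) (hn : ∀ q, 0 ≤ n q)
    (hCc : ∀ q' q, (q', q) ∈ C → c q ≤ c q')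
    (w : Q → ℝ) (hw : ∀ q, w q = (v q - c q) * n q)
    (T : Set Q) (hTfeas : depClosed C T)
    (hTopt : ∀ T' : Set Q, depClosed C T' → utility w T' ≤ utility w T)
    (b : Q → ℝ)
    (hb₁ : ∀ q, q ∈ T → 0 < w q → b q = c q)
    (hb₂ : ∀ q, ¬(q ∈ T ∧ 0 < w q) → b q = 0) :
    ∀ b' : Q → ℝ, (∀ q, 0 ≤ b' q) →
      utility w (winSet C c b') ≤ utility w (winSet C c b) := by
  intro b' _
  set S := winSet C c b with hS
  -- positive weight elements of T are in S
  have hpos : ∀ q, q ∈ T → 0 < w q → q ∈ S := by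
    intro q hqT hqw
    exact ⟨q, Relation.ReflTransGen.refl, le_of_eq (hb₁ q hqT hqw).symm⟩
  -- elements of S outside T have cost 0, hence nonneg weight
  have hSout : ∀ q, q ∈ S → q ∉ T → 0 ≤ w q := by
    rintro q ⟨q', hrtg, hle⟩ hqT
    by_cases hcase : q' ∈ T ∧ 0 < w q'
    · exact absurd (mem_of_rtg C hTfeas hrtg hcase.1) hqT
    · have hb0 : b q' = 0 := hb₂ q' hcase
      have hcq' : c q' = 0 := le_antisymm (by simpa [hb0] using hle) (hc q')
      have hcq : c q = 0 :=
        le_antisymm (hcq' ▸ cost_le_of_rtg C c hCc hrtg) (hc q)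
      rw [hw q, hcq, sub_zero]
      exact mul_nonneg (hv q) (hn q)
  calc utility w (winSet C c b') ≤ utility w T := hTopt _ (winSet_depClosed C c b')
    _ ≤ utility w S := by
        apply Finset.sum_le_sum
        intro q _
        by_cases hqS : q ∈ S <;> by_cases hqT : q ∈ T
        · simp [Set.indicator_of_mem, hqS, hqT]
        · have := hSout q hqS hqT
          simp only [Set.indicator_of_mem hqS, Set.indicator_of_notMem hqT]
          exact this
        · have hwq : w q ≤ 0 := by
            by_contra h
            exact hqS (hpos q hqT (lt_of_not_ge h))
          simp only [Set.indicator_of_mem hqT, Set.indicator_of_notMem hqS]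
          exact hwq
        · simp [Set.indicator_of_notMem, hqS, hqT]
end

section
/- A subset T ⊆ Q is the winning set of some bid under max-aggregation broad match if and only if T is downward closed under the dependency relation C, i.e., for every pair (q',q) ∈ C, q' ∈ T implies q ∈ T. -/
open Finset

/-- under max-aggregation broad match, a set `T` of queries is the
winning set of some (nonnegative) bid if and only if it is closed under the
dependency relation `C = {(q',q) : q matches q' and c q' ≥ c q}`.
Here `M q q'` means "query q broadly matches the phrase q'"; matching is
reflexive and transitive, and all costs are positive. The interpreted bid of a
query is the maximum of the bids of the phrases it matches. -/
theorem stmt_1 {Q : Type*} [Fintype Q] [DecidableEq Q]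
    (M : Q → Q → Prop) [DecidableRel M]
    (hrefl : ∀ q, M q q)
    (htrans : ∀ a b c, M a b → M b c → M a c)
    (c : Q → NNReal) (hc : ∀ q, 0 < c q)
    (T : Set Q) :
    (∃ b : Q → NNReal,
        T = {q | c q ≤ (Finset.univ.filter (fun q' => M q q')).sup b}) ↔
    (∀ q' q, M q q' → c q ≤ c q' → q' ∈ T → q ∈ T) := by
  classical
  constructor
  · rintro ⟨b, rfl⟩ q' q hM hcc hq'
    simp only [Set.mem_setOf_eq] at hq' ⊢
    refine hcc.trans (hq'.trans (Finset.sup_mono ?_))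
    intro p hp
    simp only [Finset.mem_filter, Finset.mem_univ, true_and] at hp ⊢
    exact htrans q q' p hM hp
  · intro hclosed
    refine ⟨fun q' => if q' ∈ T then c q' else 0, ?_⟩
    ext q
    simp only [Set.mem_setOf_eq]
    constructor
    · intro hq
      refine le_trans ?_ (Finset.le_sup (f := fun q' => if q' ∈ T then c q' else 0)
        (by simp [hrefl q] : q ∈ Finset.univ.filter (fun q' => M q q')))
      simp [hq]
    · intro hq
      rw [Finset.le_sup_iff (hc q)] at hq
      obtain ⟨q', hq', hle⟩ := hq
      simp only [Finset.mem_filter, Finset.mem_univ, true_and] at hq'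
      by_cases hqT : q' ∈ T
      · simp only [if_pos hqT] at hle
        exact hclosed q' q hq' hle hqT
      · simp only [if_neg hqT] at hle
        exact absurd hle (by simpa using (hc q).ne')
end

section
/- Let G = (V,E) be the flow graph with source s, sink t, vertices Q⁺ = {q : w(q) > 0} and Q⁻ = {q : w(q) ≤ 0}, edges s→q of capacity |w(q)| for q ∈ Q⁻, edges p→t of capacity w(p) for p ∈ Q⁺, and edges p→q of infinite capacity for (p,q) ∈ C with p ∈ Q⁺, q ∈ Q⁻. If (S,T) is a minimum s-t cut with t ∈ T and cut value c, then T \ {t} is a feasible winning set with utility Σ_{q∈Q⁺} w(q) − c, and this equals the maximum utility over all feasible winning sets. -/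
open Finset

namespace FlowGraph

variable {Q : Type*} [Fintype Q] [DecidableEq Q]

/-- Vertices: the queries plus a source `inr false` and a sink `inr true`. -/
abbrev V (Q : Type*) := Q ⊕ Bool

/-- Capacities of the flow graph: `s → q` of capacity `|w q|` for `w q ≤ 0`,
`p → t` of capacity `w p` for `w p > 0`, and an "infinite" capacity `M` edge
joining `p ∈ Q⁺` and `q ∈ Q⁻` for each dependency pair `(p, q) ∈ C` (oriented
so that a directed cut pays `M` exactly when `p` is on the sink side and `q`
on the source side, i.e. when closedness is violated). -/
noncomputable def cap (C : Finset (Q × Q)) (w : Q → ℝ) (M : ℝ) : V Q → V Q → ℝ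
  | Sum.inr false, Sum.inl q => if w q ≤ 0 then |w q| else 0
  | Sum.inl p, Sum.inr true => if 0 < w p then w p else 0
  | Sum.inl q, Sum.inl p => if (p, q) ∈ C ∧ 0 < w p ∧ w q ≤ 0 then M else 0
  | _, _ => 0

/-- The value of the cut `(S, Sᶜ)`: total capacity of edges from `S` to `Sᶜ`. -/
noncomputable def cutVal (C : Finset (Q × Q)) (w : Q → ℝ) (M : ℝ)
    (S : Finset (V Q)) : ℝ :=
  ∑ u ∈ S, ∑ v ∈ Sᶜ, cap C w M u v

/-- A set of queries closed under the dependency relation. -/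
def closed (C : Finset (Q × Q)) (T : Finset Q) : Prop :=
  ∀ p q, (p, q) ∈ C → p ∈ T → q ∈ T

lemma cap_ll (C : Finset (Q × Q)) (w : Q → ℝ) (M : ℝ) (q p : Q) :
    cap C w M (Sum.inl q) (Sum.inl p) = if (p, q) ∈ C ∧ 0 < w p ∧ w q ≤ 0 then M else 0 := rfl
lemma cap_lt (C : Finset (Q × Q)) (w : Q → ℝ) (M : ℝ) (p : Q) :
    cap C w M (Sum.inl p) (Sum.inr true) = if 0 < w p then w p else 0 := rfl
lemma cap_lf (C : Finset (Q × Q)) (w : Q → ℝ) (M : ℝ) (p : Q) :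
    cap C w M (Sum.inl p) (Sum.inr false) = 0 := rfl
lemma cap_fl (C : Finset (Q × Q)) (w : Q → ℝ) (M : ℝ) (q : Q) :
    cap C w M (Sum.inr false) (Sum.inl q) = if w q ≤ 0 then |w q| else 0 := rfl
lemma cap_tl (C : Finset (Q × Q)) (w : Q → ℝ) (M : ℝ) (q : Q) :
    cap C w M (Sum.inr true) (Sum.inl q) = 0 := rfl
lemma cap_rr (C : Finset (Q × Q)) (w : Q → ℝ) (M : ℝ) (a b : Bool) :
    cap C w M (Sum.inr a) (Sum.inr b) = 0 := by cases a <;> cases b <;> rfl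

lemma cutVal_expand (C : Finset (Q × Q)) (w : Q → ℝ) (M : ℝ) (S : Finset (V Q))
    (hs : Sum.inr false ∈ S) (ht : Sum.inr true ∉ S) :
    cutVal C w M S
      = (∑ q : Q, ∑ p : Q, if Sum.inl q ∈ S ∧ Sum.inl p ∉ S then
          (if (p, q) ∈ C ∧ 0 < w p ∧ w q ≤ 0 then M else 0) else 0)
        + (∑ p : Q, if Sum.inl p ∈ S ∧ 0 < w p then w p else 0)
        + (∑ q : Q, if Sum.inl q ∉ S ∧ w q ≤ 0 then |w q| else 0) := by
  have h : ∀ (g : V Q → ℝ), ∑ u ∈ S, g u = ∑ u : V Q, if u ∈ S then g u else 0 := by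
    intro g
    simp [Finset.sum_ite_mem]
  have h2 : ∀ (g : V Q → ℝ), ∑ u ∈ Sᶜ, g u = ∑ u : V Q, if u ∉ S then g u else 0 := by
    intro g
    rw [← Finset.sum_filter]
    congr 1
    ext x
    simp
  unfold cutVal
  rw [h]
  simp only [h2]
  rw [Fintype.sum_sum_type]
  simp only [Fintype.sum_sum_type, Fintype.sum_bool, cap_ll, cap_lt, cap_lf, cap_fl, cap_tl, cap_rr, hs, ht, if_true, if_false,
    if_neg ht, if_pos hs]
  simp only [not_false_eq_true, not_true_eq_false, if_true, if_false, add_zero, zero_add]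
  rw [← Finset.sum_add_distrib, ← Finset.sum_add_distrib, ← Finset.sum_add_distrib]
  apply Finset.sum_congr rfl
  intro x _
  by_cases hx : Sum.inl x ∈ S <;> simp [hx]

lemma cutVal_key (C : Finset (Q × Q)) (w : Q → ℝ) (M : ℝ) (S : Finset (V Q))
    (hs : Sum.inr false ∈ S) (ht : Sum.inr true ∉ S)
    (hcl : ∀ p q, (p, q) ∈ C → Sum.inl p ∉ S → Sum.inl q ∉ S) :
    (∑ q ∈ univ.filter (fun q => Sum.inl q ∉ S), w q)
      = (∑ q ∈ univ.filter (fun q => 0 < w q), w q) - cutVal C w M S := by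
  rw [cutVal_expand C w M S hs ht]
  have h0 : (∑ q : Q, ∑ p : Q, if Sum.inl q ∈ S ∧ Sum.inl p ∉ S then
      (if (p, q) ∈ C ∧ 0 < w p ∧ w q ≤ 0 then M else 0) else 0) = 0 := by
    apply Finset.sum_eq_zero
    intro q _
    apply Finset.sum_eq_zero
    intro p _
    split_ifs with h1 h2
    · exact absurd (hcl p q h2.1 h1.2) (not_not_intro h1.1)
    · rfl
    · rfl
  rw [h0, zero_add]
  simp only [Finset.sum_filter]
  rw [← Finset.sum_add_distrib, ← Finset.sum_sub_distrib]
  apply Finset.sum_congr rfl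
  intro x _
  by_cases hx : Sum.inl x ∈ S <;> rcases lt_or_ge 0 (w x) with hw | hw <;>
    simp [hx, hw, abs_of_nonpos, not_lt, not_le] <;> split_ifs <;> simp_all <;> linarith

lemma cutVal_violation (C : Finset (Q × Q)) (w : Q → ℝ) (M : ℝ) (hM0 : 0 ≤ M)
    (hC : ∀ p q, (p, q) ∈ C → 0 < w p ∧ w q ≤ 0)
    (S : Finset (V Q)) (hs : Sum.inr false ∈ S) (ht : Sum.inr true ∉ S)
    (p q : Q) (hpq : (p, q) ∈ C) (hq : Sum.inl q ∈ S) (hp : Sum.inl p ∉ S) :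
    M ≤ cutVal C w M S := by
  rw [cutVal_expand C w M S hs ht]
  have hterm : ∀ a b : Q, (0:ℝ) ≤ if Sum.inl a ∈ S ∧ Sum.inl b ∉ S then
      (if (b, a) ∈ C ∧ 0 < w b ∧ w a ≤ 0 then M else 0) else 0 := by
    intro a b
    split_ifs <;> simp [hM0]
  have h1 : M ≤ ∑ a : Q, ∑ b : Q, if Sum.inl a ∈ S ∧ Sum.inl b ∉ S then
      (if (b, a) ∈ C ∧ 0 < w b ∧ w a ≤ 0 then M else 0) else 0 := by
    have hin : M ≤ ∑ b : Q, if Sum.inl q ∈ S ∧ Sum.inl b ∉ S then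
        (if (b, q) ∈ C ∧ 0 < w b ∧ w q ≤ 0 then M else 0) else 0 := by
      have := Finset.single_le_sum (f := fun b => if Sum.inl q ∈ S ∧ Sum.inl b ∉ S then
        (if (b, q) ∈ C ∧ 0 < w b ∧ w q ≤ 0 then M else 0) else 0)
        (fun b _ => hterm q b) (mem_univ p)
      simpa [hq, hp, hpq, (hC p q hpq).1, (hC p q hpq).2] using this
    calc M ≤ _ := hin
    _ ≤ _ := Finset.single_le_sum (f := fun a => ∑ b : Q, if Sum.inl a ∈ S ∧ Sum.inl b ∉ S then
        (if (b, a) ∈ C ∧ 0 < w b ∧ w a ≤ 0 then M else 0) else 0)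
        (fun a _ => Finset.sum_nonneg (fun b _ => hterm a b)) (mem_univ q)
  have h2 : (0:ℝ) ≤ ∑ p : Q, if Sum.inl p ∈ S ∧ 0 < w p then w p else 0 := by
    apply Finset.sum_nonneg; intro x _; split_ifs with h <;> [linarith [h.2]; rfl]
  have h3 : (0:ℝ) ≤ ∑ q : Q, if Sum.inl q ∉ S ∧ w q ≤ 0 then |w q| else 0 := by
    apply Finset.sum_nonneg; intro x _; split_ifs <;> [exact abs_nonneg _; rfl]
  linarith

/-- if `(S, Sᶜ)` is a minimum s-t cut of the flow graph, then the
queries on the sink side form a feasible winning set whose utility is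
`Σ_{w q > 0} w q − cutval`, and this utility is the maximum over all feasible
winning sets. -/
theorem stmt_5 (C : Finset (Q × Q)) (w : Q → ℝ)
    (hC : ∀ p q, (p, q) ∈ C → 0 < w p ∧ w q ≤ 0)
    (M : ℝ) (hM : M = (∑ q ∈ univ.filter (fun q => 0 < w q), w q) + 1)
    (S : Finset (V Q)) (hs : Sum.inr false ∈ S) (ht : Sum.inr true ∉ S)
    (hmin : ∀ S' : Finset (V Q), Sum.inr false ∈ S' → Sum.inr true ∉ S' →
      cutVal C w M S ≤ cutVal C w M S') :
    closed C (univ.filter (fun q => Sum.inl q ∉ S)) ∧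
    (∑ q ∈ univ.filter (fun q => Sum.inl q ∉ S), w q) =
      (∑ q ∈ univ.filter (fun q => 0 < w q), w q) - cutVal C w M S ∧
    (∀ U : Finset Q, closed C U →
      ∑ q ∈ U, w q ≤ ∑ q ∈ univ.filter (fun q => Sum.inl q ∉ S), w q) := by
  have hQpos : (0:ℝ) ≤ ∑ q ∈ univ.filter (fun q => 0 < w q), w q :=
    Finset.sum_nonneg (fun q hq => le_of_lt (mem_filter.mp hq).2)
  have hM0 : (0:ℝ) ≤ M := by rw [hM]; linarith
  -- cut value of the set S_U for a closed U
  have hcutU : ∀ U : Finset Q, closed C U →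
      ∃ S' : Finset (V Q), Sum.inr false ∈ S' ∧ Sum.inr true ∉ S' ∧
        (∑ q ∈ U, w q) = (∑ q ∈ univ.filter (fun q => 0 < w q), w q) - cutVal C w M S' := by
    intro U hU
    refine ⟨insert (Sum.inr false) ((univ \ U).image Sum.inl), mem_insert_self _ _, by simp, ?_⟩
    set SU : Finset (FlowGraph.V Q) := insert (Sum.inr false) ((univ \ U).image Sum.inl) with hSU
    have hmem : ∀ q : Q, Sum.inl q ∈ SU ↔ q ∉ U := fun q => by simp [hSU]
    have hfil : univ.filter (fun q => Sum.inl q ∉ SU) = U := by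
      ext q; simp [hmem q]
    have hcl : ∀ p q, (p, q) ∈ C → Sum.inl p ∉ SU → Sum.inl q ∉ SU := by
      intro p q hpq hp
      rw [hmem, not_not] at hp ⊢
      exact hU p q hpq hp
    have := cutVal_key C w M SU (mem_insert_self _ _) (by simp [hSU]) hcl
    rw [hfil] at this
    exact this
  -- the cut value is at most the total positive weight
  have hle : cutVal C w M S ≤ ∑ q ∈ univ.filter (fun q => 0 < w q), w q := by
    obtain ⟨S', hs', ht', hval⟩ := hcutU ∅ (fun p q _ h => absurd h (Finset.notMem_empty p))
    have := hmin S' hs' ht'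
    simp only [Finset.sum_empty] at hval
    linarith
  -- closedness of the sink side
  have hclosed : closed C (univ.filter (fun q => Sum.inl q ∉ S)) := by
    intro p q hpq hp
    simp only [mem_filter, mem_univ, true_and] at hp ⊢
    by_contra hq

    have := cutVal_violation C w M hM0 hC S hs ht p q hpq hq hp

    linarith
  have hcl : ∀ p q, (p, q) ∈ C → Sum.inl p ∉ S → Sum.inl q ∉ S := by
    intro p q hpq hp
    have := hclosed p q hpq (by simp [hp])
    simpa using this
  have hkey := cutVal_key C w M S hs ht hcl
  refine ⟨hclosed, hkey, fun U hU => ?_⟩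
  obtain ⟨S', hs', ht', hval⟩ := hcutU U hU
  have := hmin S' hs' ht'
  linarith

end FlowGraph
end

section
/- Given a graph G = (V, E), construct the keyword-language bidding instance with a keyword for each vertex v of weight −(deg(v)−1) and a pair-query for each edge of weight 1, where bidding on (and winning) a vertex-keyword forces winning all edge-queries incident to it. Then the maximum utility over feasible bid selections equals the maximum size of an independent set in G. -/
open Finset

namespace IndepReduction

variable {V : Type*} [Fintype V] [DecidableEq V]

/-- An independent set of vertices. -/
def indep (G : SimpleGraph V) (s : Finset V) : Prop :=
  ∀ a ∈ s, ∀ b ∈ s, a ≠ b → ¬ G.Adj a b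

/-- Utility of selecting the vertex-keywords in `A`: each selected vertex `v`
contributes its keyword weight `−(deg v − 1)`, and each edge-query incident to
`A` contributes `1`. -/
def util (G : SimpleGraph V) [DecidableRel G.Adj] (A : Finset V) : ℤ :=
  (∑ v ∈ A, (1 - (G.degree v : ℤ))) +
    ((G.edgeFinset.filter (fun e => ∃ v ∈ A, v ∈ e)).card : ℤ)

-- internal edges
def internal (G : SimpleGraph V) [DecidableRel G.Adj] (A : Finset V) : Finset (Sym2 V) :=
  G.edgeFinset.filter (fun e => ∀ v ∈ e, v ∈ A)

lemma count_eq (A : Finset V) {e : Sym2 V} (he : ¬ e.IsDiag) :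
    ((A.filter (fun v => v ∈ e)).card : ℤ) =
      (if ∃ v ∈ A, v ∈ e then 1 else 0) + (if ∀ v ∈ e, v ∈ A then 1 else 0) := by
  induction e using Sym2.ind with
  | _ a b =>
    rw [Sym2.isDiag_iff_proj_eq] at he
    have hfil : A.filter (fun v => v ∈ s(a, b)) = A.filter (fun v => v = a ∨ v = b) := by
      apply Finset.filter_congr; intro v _; simp [Sym2.mem_iff]
    rw [hfil, Finset.filter_or, Finset.filter_eq', Finset.filter_eq']
    have hex : (∃ v ∈ A, v = a ∨ v = b) ↔ (a ∈ A ∨ b ∈ A) := by aesop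
    by_cases ha : a ∈ A <;> by_cases hb : b ∈ A <;>
      simp [ha, hb, Sym2.mem_iff, hex, he, Finset.card_union_of_disjoint,
        Finset.disjoint_singleton_left, Ne.symm he]

lemma util_eq (G : SimpleGraph V) [DecidableRel G.Adj] (A : Finset V) :
    util G A = (A.card : ℤ) - ((internal G A).card : ℤ) := by
  have hdeg : ∀ v, (G.degree v : ℤ) = ((G.edgeFinset.filter (fun e => v ∈ e)).card : ℤ) := by
    intro v
    rw [← SimpleGraph.card_incidenceFinset_eq_degree, SimpleGraph.incidenceFinset_eq_filter]
  have hsum : (∑ v ∈ A, (G.degree v : ℤ)) =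
      ((G.edgeFinset.filter (fun e => ∃ v ∈ A, v ∈ e)).card : ℤ) + ((internal G A).card : ℤ) := by
    calc (∑ v ∈ A, (G.degree v : ℤ))
        = ∑ v ∈ A, ∑ e ∈ G.edgeFinset, (if v ∈ e then (1 : ℤ) else 0) := by
          simp [hdeg, Finset.sum_boole]
      _ = ∑ e ∈ G.edgeFinset, ∑ v ∈ A, (if v ∈ e then (1 : ℤ) else 0) := Finset.sum_comm
      _ = ∑ e ∈ G.edgeFinset, ((A.filter (fun v => v ∈ e)).card : ℤ) := by
          apply Finset.sum_congr rfl; intro e _; rw [Finset.sum_boole]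
      _ = ∑ e ∈ G.edgeFinset,
            ((if ∃ v ∈ A, v ∈ e then (1:ℤ) else 0) + (if ∀ v ∈ e, v ∈ A then 1 else 0)) := by
          apply Finset.sum_congr rfl; intro e he
          exact count_eq A (G.not_isDiag_of_mem_edgeFinset he)
      _ = _ := by
          rw [Finset.sum_add_distrib, Finset.sum_boole, Finset.sum_boole]
          simp [internal]
  unfold util
  rw [Finset.sum_sub_distrib, hsum]
  push_cast
  simp [Finset.sum_const]
  ring

lemma util_indep (G : SimpleGraph V) [DecidableRel G.Adj] {I : Finset V} (hI : indep G I) :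
    util G I = (I.card : ℤ) := by
  rw [util_eq]
  have : internal G I = ∅ := by
    apply Finset.eq_empty_of_forall_notMem
    intro e he
    simp only [internal, Finset.mem_filter, SimpleGraph.mem_edgeFinset] at he
    obtain ⟨he1, he2⟩ := he
    induction e using Sym2.ind with
    | _ a b =>
      rw [SimpleGraph.mem_edgeSet] at he1
      exact hI a (he2 a (by simp)) b (he2 b (by simp)) (G.ne_of_adj he1) he1
  simp [this]

lemma exists_indep_ge (G : SimpleGraph V) [DecidableRel G.Adj] (A : Finset V) :
    ∃ s : Finset V, indep G s ∧ util G A ≤ (s.card : ℤ) := by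
  induction A using Finset.strongInductionOn with
  | _ A ih =>
    by_cases hA : indep G A
    · exact ⟨A, hA, le_of_eq (util_indep G hA)⟩
    · simp only [indep, not_forall] at hA
      obtain ⟨a, ha, b, hb, hab, hadj⟩ := hA
      rw [not_not] at hadj
      have hmem : s(a, b) ∈ internal G A := by
        simp only [internal, Finset.mem_filter, SimpleGraph.mem_edgeFinset,
          SimpleGraph.mem_edgeSet]
        exact ⟨hadj, by intro v hv; rcases Sym2.mem_iff.mp hv with h | h <;> simp [h, ha, hb]⟩
      have hsub : internal G (A.erase a) ⊆ (internal G A).erase s(a, b) := by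
        intro e he
        simp only [internal, Finset.mem_filter] at he
        rw [Finset.mem_erase]
        constructor
        · intro h
          rw [h] at he
          exact (Finset.notMem_erase a A) (he.2 a (by simp))
        · exact Finset.mem_filter.mpr ⟨he.1, fun v hv => Finset.mem_of_mem_erase (he.2 v hv)⟩
      have hcard : (internal G (A.erase a)).card ≤ (internal G A).card - 1 := by
        calc (internal G (A.erase a)).card ≤ ((internal G A).erase s(a, b)).card :=
              Finset.card_le_card hsub
          _ = (internal G A).card - 1 := Finset.card_erase_of_mem hmem
      have hle : util G A ≤ util G (A.erase a) := by
        rw [util_eq, util_eq, Finset.card_erase_of_mem ha]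
        have h1 : (1 : ℕ) ≤ (internal G A).card := Finset.card_pos.mpr ⟨_, hmem⟩ 
        have h2 : (1 : ℕ) ≤ A.card := Finset.card_pos.mpr ⟨a, ha⟩
        have := hcard
        omega
      obtain ⟨s, hs, hle'⟩ := ih (A.erase a) (Finset.erase_ssubset ha)
      exact ⟨s, hs, hle.trans hle'⟩

/-- the maximum utility over all keyword selections in the
reduction instance equals the maximum size of an independent set of `G`. -/
theorem stmt_8 (G : SimpleGraph V) [DecidableRel G.Adj] (m : ℤ) :
    IsGreatest {x : ℤ | ∃ A : Finset V, x = util G A} m ↔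
    IsGreatest {x : ℤ | ∃ s : Finset V, indep G s ∧ x = (s.card : ℤ)} m := by
  set S := {x : ℤ | ∃ A : Finset V, x = util G A}
  set T := {x : ℤ | ∃ s : Finset V, indep G s ∧ x = (s.card : ℤ)}
  have hTS : T ⊆ S := by
    rintro x ⟨s, hs, rfl⟩
    exact ⟨s, (util_indep G hs).symm⟩
  have hdom : ∀ x ∈ S, ∃ y ∈ T, x ≤ y := by
    rintro x ⟨A, rfl⟩
    obtain ⟨s, hs, hle⟩ := exists_indep_ge G A
    exact ⟨(s.card : ℤ), ⟨s, hs, rfl⟩, hle⟩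
  constructor
  · rintro ⟨hm, hub⟩
    obtain ⟨y, hyT, hxy⟩ := hdom m hm
    have hym : y ≤ m := hub (hTS hyT)
    have : m = y := le_antisymm hxy hym
    exact ⟨this ▸ hyT, fun x hx => hub (hTS hx)⟩
  · rintro ⟨hm, hub⟩
    refine ⟨hTS hm, fun x hx => ?_⟩
    obtain ⟨y, hyT, hxy⟩ := hdom x hx
    exact hxy.trans (hub hyT)

end IndepReduction
end

section
/- Every basic feasible (vertex/extreme-point) optimal solution X* of the budgeted LP — maximize Σ_q v(q)n(q)X_q subject to X_q ≥ X_{q'} for (q',q) ∈ C, Σ_q c(q)n(q)X_q ≤ B, 0 ≤ X_q ≤ 1 — has at most one distinct fractional value: there exists a real α ∈ (0,1) such that X*_q ∈ {0, 1, α} for every query q. -/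
open Finset

namespace BudgetedBFS

variable {Q : Type*} [Fintype Q]

/-- Feasibility for the budgeted LP: box constraints, dependency constraints
`X_{q'} ≤ X_q` for `(q', q) ∈ C`, and the budget constraint. -/
def feasible (C : Set (Q × Q)) (c n : Q → ℝ) (B : ℝ) (x : Q → ℝ) : Prop :=
  (∀ q, 0 ≤ x q ∧ x q ≤ 1) ∧
  (∀ p q, (p, q) ∈ C → x p ≤ x q) ∧
  (∑ q, c q * n q * x q) ≤ B

set_option maxHeartbeats 1000000 in
lemma frac_eq (C : Set (Q × Q)) (c n : Q → ℝ) (B : ℝ)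
    (hc : ∀ q, 0 ≤ c q) (hn : ∀ q, 0 ≤ n q)
    (x : Q → ℝ) (hx : feasible C c n B x)
    (hextreme : ∀ y z, feasible C c n B y → feasible C c n B z →
      (∀ q, x q = (y q + z q) / 2) → y = z)
    (q1 q2 : Q) (h10 : x q1 ≠ 0) (h11 : x q1 ≠ 1)
    (h20 : x q2 ≠ 0) (h21 : x q2 ≠ 1) : x q1 = x q2 := by
  classical
  by_contra hab
  obtain ⟨hbox, hdep, hbud⟩ := hx
  set a := x q1 with ha
  set b := x q2 with hb
  have ha0 : 0 < a := lt_of_le_of_ne (hbox q1).1 (Ne.symm h10)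
  have ha1 : a < 1 := lt_of_le_of_ne (hbox q1).2 h11
  have hb0 : 0 < b := lt_of_le_of_ne (hbox q2).1 (Ne.symm h20)
  have hb1 : b < 1 := lt_of_le_of_ne (hbox q2).2 h21
  have hcn : ∀ q, 0 ≤ c q * n q := fun q => mul_nonneg (hc q) (hn q)
  set sa := ∑ q, if x q = a then c q * n q else 0 with hsa_def
  set sb := ∑ q, if x q = b then c q * n q else 0 with hsb_def
  have hsa0 : 0 ≤ sa := Finset.sum_nonneg fun q _ => by
    split_ifs; exacts [hcn q, le_rfl]
  have hsb0 : 0 ≤ sb := Finset.sum_nonneg fun q _ => by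
    split_ifs; exacts [hcn q, le_rfl]
  set ρa := if sa = 0 then (1:ℝ) else sb with hρa_def
  set ρb := if sa = 0 then (0:ℝ) else sa with hρb_def
  have hρa0 : 0 ≤ ρa := by rw [hρa_def]; split_ifs; exacts [zero_le_one, hsb0]
  have hρb0 : 0 ≤ ρb := by rw [hρb_def]; split_ifs; exacts [le_rfl, hsa0]
  have hbal : ρa * sa = ρb * sb := by
    rw [hρa_def, hρb_def]; split_ifs with h
    · simp [h]
    · ring
  have hne : ρa ≠ 0 ∨ ρb ≠ 0 := by
    rw [hρa_def, hρb_def]; split_ifs with h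
    · exact Or.inl one_ne_zero
    · exact Or.inr h
  set M := max ρa ρb + 1 with hM_def
  have hmax0 : 0 ≤ max ρa ρb := le_trans hρa0 (le_max_left _ _)
  have hM : 0 < M := by rw [hM_def]; linarith
  have hρaM : ρa ≤ M := by
    have := le_max_left ρa ρb; rw [hM_def]; linarith
  have hρbM : ρb ≤ M := by
    have := le_max_right ρa ρb; rw [hM_def]; linarith
  set coef : Q → ℝ := fun q =>
    ρa * (if x q = a then (1:ℝ) else 0) - ρb * (if x q = b then (1:ℝ) else 0)
    with hcoef_def
  have hcoefb : ∀ q, -M ≤ coef q ∧ coef q ≤ M := by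
    intro q; rw [hcoef_def]; dsimp only
    split_ifs with h1 h2
    · exact absurd (h1.symm.trans h2) hab
    · constructor <;> [skip; skip] <;> · simp; linarith
    · constructor <;> · simp; linarith
    · constructor <;> · simp; linarith
  have hcoef_eq : ∀ p q, x p = x q → coef p = coef q := by
    intro p q h; rw [hcoef_def]; dsimp only; rw [h]
  have hsum0 : ∑ q, c q * n q * coef q = 0 := by
    have step : ∀ q ∈ (Finset.univ : Finset Q), c q * n q * coef q =
        ρa * (if x q = a then c q * n q else 0)
          - ρb * (if x q = b then c q * n q else 0) := by
      intro q _; rw [hcoef_def]; dsimp only; split_ifs <;> ring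
    rw [Finset.sum_congr rfl step, Finset.sum_sub_distrib,
      ← Finset.mul_sum, ← Finset.mul_sum, ← hsa_def, ← hsb_def,
      hbal, sub_self]
  -- gap bound
  set gapset : Finset ℝ := insert 1
    (((Finset.univ : Finset (Q × Q)).filter (fun pq => x pq.1 < x pq.2)).image
      (fun pq => x pq.2 - x pq.1)) with hgap_def
  have hgne : gapset.Nonempty := ⟨1, Finset.mem_insert_self _ _⟩
  set g := gapset.min' hgne with hg_def
  have hgpos : 0 < g := by
    rw [hg_def, Finset.lt_min'_iff]
    intro y hy
    rw [hgap_def, Finset.mem_insert] at hy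
    rcases hy with rfl | hy
    · exact one_pos
    · obtain ⟨pq, hpq, rfl⟩ := Finset.mem_image.1 hy
      have := (Finset.mem_filter.1 hpq).2
      linarith
  have hgap : ∀ p q : Q, x p < x q → g ≤ x q - x p := by
    intro p q h
    exact Finset.min'_le _ _ (Finset.mem_insert_of_mem
      (Finset.mem_image.2 ⟨(p, q), Finset.mem_filter.2 ⟨Finset.mem_univ _, h⟩, rfl⟩))
  set m1 := min (min a (1 - a)) (min b (1 - b)) with hm1_def
  have hm1 : 0 < m1 := by
    rw [hm1_def]
    apply lt_min (lt_min ha0 (by linarith)) (lt_min hb0 (by linarith))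
  set ε := min m1 g / (2 * M) with hε_def
  have hε : 0 < ε := div_pos (lt_min hm1 hgpos) (by linarith)
  have h2εM : 2 * ε * M = min m1 g := by
    rw [hε_def]; field_simp
  have hmin_m1 : min m1 g ≤ m1 := min_le_left _ _
  have hmin_g : min m1 g ≤ g := min_le_right _ _
  have hm1a : m1 ≤ a := le_trans (min_le_left _ _) (min_le_left _ _)
  have hm1a' : m1 ≤ 1 - a := le_trans (min_le_left _ _) (min_le_right _ _)
  have hm1b : m1 ≤ b := le_trans (min_le_right _ _) (min_le_left _ _)
  have hm1b' : m1 ≤ 1 - b := le_trans (min_le_right _ _) (min_le_right _ _)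
  -- general feasibility of perturbation
  have feas : ∀ σ : ℝ, σ = 1 ∨ σ = -1 →
      feasible C c n B (fun q => x q + σ * ε * coef q) := by
    intro σ hσ
    have hσb : ∀ q, -M ≤ σ * coef q ∧ σ * coef q ≤ M := by
      intro q
      obtain ⟨hl, hr⟩ := hcoefb q
      rcases hσ with rfl | rfl
      · constructor <;> linarith
      · constructor <;> linarith
    refine ⟨?_, ?_, ?_⟩
    · intro q
      dsimp only
      obtain ⟨hl, hr⟩ := hσb q
      have hεl : -(ε * M) ≤ σ * ε * coef q := by nlinarith
      have hεr : σ * ε * coef q ≤ ε * M := by nlinarith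
      have hcz : coef q ≠ 0 → x q = a ∨ x q = b := by
        intro hne0
        by_contra hco
        push_neg at hco
        apply hne0
        rw [hcoef_def]; dsimp only
        rw [if_neg hco.1, if_neg hco.2]; ring
      by_cases h0 : coef q = 0
      · simp only [h0, mul_zero]
        have := hbox q; constructor <;> linarith [this.1, this.2]
      · rcases hcz h0 with h | h <;> rw [h] <;> constructor <;> nlinarith
    · intro p q hpq
      have hle := hdep p q hpq
      rcases eq_or_lt_of_le hle with heq | hlt
      · dsimp only; rw [hcoef_eq p q heq, heq]
      · have hg' := hgap p q hlt
        obtain ⟨hlp, hrp⟩ := hσb p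
        obtain ⟨hlq, hrq⟩ := hσb q
        have : σ * ε * coef p - σ * ε * coef q ≤ 2 * ε * M := by nlinarith
        have hmg : 2 * ε * M ≤ g := by rw [h2εM]; exact hmin_g
        dsimp only
        linarith
    · have : ∑ q, c q * n q * (x q + σ * ε * coef q)
          = (∑ q, c q * n q * x q) + σ * ε * ∑ q, c q * n q * coef q := by
        rw [Finset.mul_sum, ← Finset.sum_add_distrib]
        exact Finset.sum_congr rfl fun q _ => by ring
      dsimp only
      rw [this, hsum0, mul_zero, add_zero]
      exact hbud
  have hy := feas 1 (Or.inl rfl)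
  have hz := feas (-1) (Or.inr rfl)
  have heq := hextreme _ _ hy hz (fun q => by ring)
  -- extract contradiction
  obtain ⟨q0, hq0⟩ : ∃ q0, coef q0 ≠ 0 := by
    rcases hne with h | h
    · refine ⟨q1, ?_⟩
      rw [hcoef_def]; dsimp only
      rw [if_pos ha.symm, if_neg (by rw [← ha]; exact hab)]
      simpa using h
    · refine ⟨q2, ?_⟩
      rw [hcoef_def]; dsimp only
      rw [if_pos hb.symm, if_neg (by rw [← hb]; exact fun h' => hab h'.symm)]
      simp only [mul_zero, mul_one, zero_sub, neg_ne_zero]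
      exact h
  have := congrFun heq q0
  apply hq0
  have hεne : (ε : ℝ) ≠ 0 := ne_of_gt hε
  nlinarith [this]


/-- every basic feasible (extreme-point) optimal solution of the
budgeted LP takes at most one distinct fractional value: there is `α ∈ (0,1)`
with `X*_q ∈ {0, 1, α}` for every `q`. -/
theorem stmt_15 (C : Set (Q × Q)) (v c n : Q → ℝ) (B : ℝ)
    (hv : ∀ q, 0 ≤ v q) (hc : ∀ q, 0 ≤ c q) (hn : ∀ q, 0 ≤ n q) (hB : 0 ≤ B)
    (x : Q → ℝ) (hx : feasible C c n B x)
    (hopt : ∀ y, feasible C c n B y → ∑ q, v q * n q * y q ≤ ∑ q, v q * n q * x q)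
    (hextreme : ∀ y z, feasible C c n B y → feasible C c n B z →
      (∀ q, x q = (y q + z q) / 2) → y = z) :
    ∃ α : ℝ, 0 < α ∧ α < 1 ∧ ∀ q, x q = 0 ∨ x q = 1 ∨ x q = α := by
  classical
  by_cases h : ∃ q, x q ≠ 0 ∧ x q ≠ 1
  · obtain ⟨q0, h0, h1⟩ := h
    refine ⟨x q0, lt_of_le_of_ne (hx.1 q0).1 (Ne.symm h0),
      lt_of_le_of_ne (hx.1 q0).2 h1, fun q => ?_⟩
    by_cases hq0 : x q = 0
    · exact Or.inl hq0
    by_cases hq1 : x q = 1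
    · exact Or.inr (Or.inl hq1)
    exact Or.inr (Or.inr (frac_eq C c n B hc hn x hx hextreme q q0 hq0 hq1 h0 h1))
  · push_neg at h
    refine ⟨1/2, by norm_num, by norm_num, fun q => ?_⟩
    by_cases hq : x q = 0
    · exact Or.inl hq
    · exact Or.inr (Or.inl (h q hq))

end BudgetedBFS
end
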